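/- Let Λ be a group acting on a countable set Y. If there exists a Λ-invariant mean on ℓ∞(Y), then either some Λ-orbit in Y is finite, or there exists a Λ-invariant mean on ℓ∞(Y) that vanishes on the indicator function of every finite subset of Y. -/
import Mathlib


/-- A real-valued function on `Y` is bounded. -/
def Bdd {Y : Type*} (f : Y → ℝ) : Prop := ∃ C : ℝ, ∀ y, |f y| ≤ C

/-- A mean on `ℓ∞(Y)`: a positive normalized linear functional on the bounded
real-valued functions on `Y` (its values on unbounded functions are irrelevant). -/
structure IsMean {Y : Type*} (m : (Y → ℝ) → ℝ) : Prop where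
  map_add : ∀ f g : Y → ℝ, Bdd f → Bdd g → m (f + g) = m f + m g
  map_smul : ∀ (c : ℝ) (f : Y → ℝ), Bdd f → m (c • f) = c * m f
  nonneg : ∀ f : Y → ℝ, Bdd f → (∀ y, 0 ≤ f y) → 0 ≤ m f
  map_one : m (fun _ => (1 : ℝ)) = 1

lemma bdd_indicator {Y : Type*} (S : Set Y) :
    Bdd (Set.indicator S (fun _ => (1 : ℝ))) := by
  refine ⟨1, fun y => ?_⟩
  by_cases h : y ∈ S <;> simp [Set.indicator, h]

lemma bdd_sub {Y : Type*} {f g : Y → ℝ} (hf : Bdd f) (hg : Bdd g) : Bdd (g - f) := by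
  obtain ⟨C, hC⟩ := hf; obtain ⟨D, hD⟩ := hg
  refine ⟨D + C, fun y => ?_⟩
  calc |(g - f) y| = |g y - f y| := rfl
    _ ≤ |g y| + |f y| := abs_sub (g y) (f y)
    _ ≤ D + C := add_le_add (hD y) (hC y)

lemma mean_mono {Y : Type*} {m : (Y → ℝ) → ℝ} (hm : IsMean m)
    {f g : Y → ℝ} (hf : Bdd f) (hg : Bdd g) (h : ∀ y, f y ≤ g y) : m f ≤ m g := by
  have hfg : g = f + (g - f) := by funext y; simp
  have := hm.map_add f (g - f) hf (bdd_sub hf hg)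
  have hnn := hm.nonneg (g - f) (bdd_sub hf hg) (fun y => by
    simpa using sub_nonneg.mpr (h y))
  rw [← hfg] at this
  linarith

lemma mean_finset_indicator {Y : Type*} {m : (Y → ℝ) → ℝ} (hm : IsMean m)
    (T : Finset Y) :
    m (Set.indicator (↑T) (fun _ => (1 : ℝ))) =
      ∑ y ∈ T, m (Set.indicator {y} (fun _ => (1 : ℝ))) := by
  classical
  induction T using Finset.induction with
  | empty =>
      have : (Set.indicator (↑(∅ : Finset Y)) (fun _ => (1 : ℝ))) = (0 : Y → ℝ) + 0 := by
        funext y; simp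
      rw [this, hm.map_add 0 0 ⟨0, by simp⟩ ⟨0, by simp⟩]
      simp
      have h0 := hm.map_add 0 0 ⟨0, by simp⟩ ⟨0, by simp⟩
      simp at h0
      linarith
  | @insert a T ha ih =>
      have hsplit : Set.indicator (↑(insert a T)) (fun _ => (1 : ℝ)) =
          Set.indicator {a} (fun _ => (1 : ℝ)) + Set.indicator (↑T) (fun _ => (1 : ℝ)) := by
        funext y
        by_cases h1 : y = a
        · subst h1
          simp [Set.indicator, ha]
        · by_cases h2 : y ∈ T <;> simp [Set.indicator, h1, h2]
      rw [hsplit, hm.map_add _ _ (bdd_indicator _) (bdd_indicator _),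
        Finset.sum_insert ha, ih]

/-- If a group `Λ` acting on a countable set `Y` admits an invariant mean on `ℓ∞(Y)`,
then either some orbit is finite, or there is an invariant mean vanishing on indicators
of finite subsets. -/
theorem invariant_mean_dichotomy {Λ Y : Type*} [Group Λ] [Countable Y] [MulAction Λ Y]
    (m : (Y → ℝ) → ℝ) (hm : IsMean m)
    (hinv : ∀ (γ : Λ) (f : Y → ℝ), Bdd f → m (fun y => f (γ⁻¹ • y)) = m f) :
    (∃ y : Y, (MulAction.orbit Λ y).Finite) ∨
    (∃ m' : (Y → ℝ) → ℝ, IsMean m' ∧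
      (∀ (γ : Λ) (f : Y → ℝ), Bdd f → m' (fun y => f (γ⁻¹ • y)) = m' f) ∧
      (∀ S : Set Y, S.Finite → m' (Set.indicator S (fun _ => (1 : ℝ))) = 0)) := by
  classical
  set w : Y → ℝ := fun y => m (Set.indicator {y} (fun _ => (1 : ℝ))) with hw
  have hwnn : ∀ y, 0 ≤ w y := fun y =>
    hm.nonneg _ (bdd_indicator _) (fun z => Set.indicator_nonneg (by simp) z)
  -- invariance of w
  have hwinv : ∀ (γ : Λ) (x : Y), w (γ • x) = w x := by
    intro γ x
    have key : (fun y => Set.indicator {x} (fun _ => (1 : ℝ)) (γ⁻¹ • y)) =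
        Set.indicator {γ • x} (fun _ => (1 : ℝ)) := by
      funext y
      have : γ⁻¹ • y = x ↔ y = γ • x := by
        constructor
        · intro h; rw [← h, smul_inv_smul]
        · intro h; rw [h, inv_smul_smul]
      by_cases h : y = γ • x
      · simp [Set.indicator, h, this.mpr h]
      · have : ¬ (γ⁻¹ • y = x) := fun hc => h (this.mp hc)
        simp [Set.indicator, h, this]
      
    have := hinv γ (Set.indicator {x} (fun _ => (1 : ℝ))) (bdd_indicator _)
    rw [key] at this
    exact this
  by_cases hpos : ∃ y : Y, 0 < w y
  · left
    obtain ⟨y, hy⟩ := hpos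
    refine ⟨y, ?_⟩
    by_contra hinf
    have hOinf : (MulAction.orbit Λ y).Infinite := hinf
    set n : ℕ := ⌈(w y)⁻¹⌉₊ + 1 with hn
    obtain ⟨T, hTsub, hTcard⟩ := hOinf.exists_subset_card_eq n
    -- each element of T has weight w y
    have hTw : ∀ t ∈ T, w t = w y := by
      intro t ht
      obtain ⟨γ, hγ⟩ := hTsub ht
      rw [← hγ, hwinv]
    have hsum : m (Set.indicator (↑T) (fun _ => (1 : ℝ))) = (n : ℝ) * w y := by
      rw [mean_finset_indicator hm]
      rw [Finset.sum_congr rfl (fun t ht => hTw t ht)]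
      simp [hTcard]
    have hle1 : m (Set.indicator (↑T) (fun _ => (1 : ℝ))) ≤ 1 := by
      have := mean_mono hm (bdd_indicator (↑T : Set Y)) (⟨1, fun y => by simp⟩ : Bdd (fun _ => (1:ℝ)))
        (fun z => Set.indicator_le_self' (by simp) z)
      rw [hm.map_one] at this
      exact this
    have hgt : (1 : ℝ) < (n : ℝ) * w y := by
      have h1 : (w y)⁻¹ ≤ (⌈(w y)⁻¹⌉₊ : ℝ) := Nat.le_ceil _
      have h2 : (w y)⁻¹ < (n : ℝ) := by
        rw [hn]; push_cast; linarith
      calc (1 : ℝ) = (w y)⁻¹ * w y := by field_simp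
        _ < (n : ℝ) * w y := by apply mul_lt_mul_of_pos_right h2 hy
    linarith [hsum ▸ hle1]
  · right
    refine ⟨m, hm, hinv, fun S hS => ?_⟩
    have hw0 : ∀ y, w y = 0 := fun y =>
      le_antisymm (not_lt.mp (fun h => hpos ⟨y, h⟩)) (hwnn y)
    have : S = ↑hS.toFinset := by simp
    rw [this, mean_finset_indicator hm]
    exact Finset.sum_eq_zero (fun t _ => hw0 t)
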